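/- Let 1/√2 < α < 1, β = √(1−α²), N ≥ 2, and P_fail = (α²−β²)^{N−1}. For the distilled assemblage Σ^dist, the x = 0 contribution to the singlet-assemblage fraction equals Σ_{a∈{0,1}} F(σ^dist_{a|0}, σ^{Φ+}_{a|0}) = ½(√(1 + P_fail(α²−β²)) + √(1 − P_fail(α²−β²))). -/

import Mathlib

open Matrix Finset
open scoped ComplexOrder

/-- Positive-semidefinite square root of a matrix (defined as `0` if the matrix
is not positive semidefinite). -/
noncomputable def matSqrt {d : ℕ} (A : Matrix (Fin d) (Fin d) ℂ) :
    Matrix (Fin d) (Fin d) ℂ :=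
  open Classical in
  if h : A.PosSemidef then
    (h.1.eigenvectorUnitary : Matrix (Fin d) (Fin d) ℂ) *
      diagonal ((↑) ∘ (fun x : ℝ => Real.sqrt x) ∘ h.1.eigenvalues) *
      (star (h.1.eigenvectorUnitary : Matrix (Fin d) (Fin d) ℂ))
  else 0

/-- Fidelity between positive semidefinite matrices: `F(A,B) = Tr[√(√A · B · √A)]`. -/
noncomputable def mFid {d : ℕ} (A B : Matrix (Fin d) (Fin d) ℂ) : ℝ :=
  (matSqrt (matSqrt A * B * matSqrt A)).trace.re

/-- The standard basis vector `|0⟩` of `ℂ²`. -/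
def e0 : Fin 2 → ℂ := ![1, 0]

/-- The standard basis vector `|1⟩` of `ℂ²`. -/
def e1 : Fin 2 → ℂ := ![0, 1]

/-- The projector `|0⟩⟨0|`. -/
def P00 : Matrix (Fin 2) (Fin 2) ℂ := vecMulVec e0 (star e0)

/-- The projector `|1⟩⟨1|`. -/
def P11 : Matrix (Fin 2) (Fin 2) ℂ := vecMulVec e1 (star e1)

/-- The Kraus operator `K⁰ = (β/α)|0⟩⟨0| + |1⟩⟨1|` of the successful filter outcome. -/
noncomputable def K0 (α β : ℝ) : Matrix (Fin 2) (Fin 2) ℂ :=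
  ((β / α : ℝ) : ℂ) • P00 + P11

/-- The Kraus operator `K¹ = (√(α²−β²)/α)|0⟩⟨0|` of the failed filter outcome. -/
noncomputable def K1 (α β : ℝ) : Matrix (Fin 2) (Fin 2) ℂ :=
  ((Real.sqrt (α ^ 2 - β ^ 2) / α : ℝ) : ℂ) • P00

/-- Bob's reduced state `ρ_B = α²|0⟩⟨0| + β²|1⟩⟨1|` of the assemblage `Σ^(α)`. -/
noncomputable def ρB (α β : ℝ) : Matrix (Fin 2) (Fin 2) ℂ :=
  ((α ^ 2 : ℝ) : ℂ) • P00 + ((β ^ 2 : ℝ) : ℂ) • P11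

/-- The vector `|α₊⟩ = α|0⟩ + β|1⟩`. -/
def ketαp (α β : ℝ) : Fin 2 → ℂ := ![(α : ℂ), (β : ℂ)]

/-- The vector `|α₋⟩ = α|0⟩ − β|1⟩`. -/
def ketαm (α β : ℝ) : Fin 2 → ℂ := ![(α : ℂ), -(β : ℂ)]

/-- The vector `|+⟩ = (|0⟩+|1⟩)/√2`. -/
noncomputable def ketp : Fin 2 → ℂ :=
  ![(1 / Real.sqrt 2 : ℝ), (1 / Real.sqrt 2 : ℝ)]

/-- The vector `|−⟩ = (|0⟩−|1⟩)/√2`. -/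
noncomputable def ketm : Fin 2 → ℂ :=
  ![(1 / Real.sqrt 2 : ℝ), (-(1 / Real.sqrt 2) : ℝ)]

/-- The assemblage `Σ^(α)` with components `σ^(α)_{a|x}` (first index `a`, second `x`):
`σ^(α)_{0|0} = α²|0⟩⟨0|`, `σ^(α)_{1|0} = β²|1⟩⟨1|`,
`σ^(α)_{0|1} = ½|α₊⟩⟨α₊|`, `σ^(α)_{1|1} = ½|α₋⟩⟨α₋|`. -/
noncomputable def σα (α β : ℝ) (a x : Fin 2) : Matrix (Fin 2) (Fin 2) ℂ :=
  if x = 0 then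
    if a = 0 then ((α ^ 2 : ℝ) : ℂ) • P00 else ((β ^ 2 : ℝ) : ℂ) • P11
  else
    if a = 0 then (1 / 2 : ℂ) • vecMulVec (ketαp α β) (star (ketαp α β))
    else (1 / 2 : ℂ) • vecMulVec (ketαm α β) (star (ketαm α β))

/-- The singlet assemblage `Σ^{Φ⁺}` with components
`σ^{Φ⁺}_{0|0} = ½|0⟩⟨0|`, `σ^{Φ⁺}_{1|0} = ½|1⟩⟨1|`,
`σ^{Φ⁺}_{0|1} = ½|+⟩⟨+|`, `σ^{Φ⁺}_{1|1} = ½|−⟩⟨−|`. -/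
noncomputable def σΦ (a x : Fin 2) : Matrix (Fin 2) (Fin 2) ℂ :=
  if x = 0 then
    if a = 0 then (1 / 2 : ℂ) • P00 else (1 / 2 : ℂ) • P11
  else
    if a = 0 then (1 / 2 : ℂ) • vecMulVec ketp (star ketp)
    else (1 / 2 : ℂ) • vecMulVec ketm (star ketm)

/-- The distilled assemblage `Σ^dist` obtained on average from the `N`-copy protocol,
with `P_fail = (α²−β²)^{N−1}` and `P_success = 1 − P_fail`:
`σ^dist_{0|0} = (½P_success + α²P_fail)|0⟩⟨0|`,
`σ^dist_{1|0} = (½P_success + β²P_fail)|1⟩⟨1|`,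
`σ^dist_{0|1} = ½(P_success|+⟩⟨+| + P_fail|α₊⟩⟨α₊|)`,
`σ^dist_{1|1} = ½(P_success|−⟩⟨−| + P_fail|α₋⟩⟨α₋|)`. -/
noncomputable def σdist (α β : ℝ) (N : ℕ) (a x : Fin 2) : Matrix (Fin 2) (Fin 2) ℂ :=
  let Pfail : ℝ := (α ^ 2 - β ^ 2) ^ (N - 1)
  let Psuccess : ℝ := 1 - Pfail
  if x = 0 then
    if a = 0 then ((1 / 2 * Psuccess + α ^ 2 * Pfail : ℝ) : ℂ) • P00
    else ((1 / 2 * Psuccess + β ^ 2 * Pfail : ℝ) : ℂ) • P11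
  else
    if a = 0 then
      (1 / 2 : ℂ) • (((Psuccess : ℝ) : ℂ) • vecMulVec ketp (star ketp) +
        ((Pfail : ℝ) : ℂ) • vecMulVec (ketαp α β) (star (ketαp α β)))
    else
      (1 / 2 : ℂ) • (((Psuccess : ℝ) : ℂ) • vecMulVec ketm (star ketm) +
        ((Pfail : ℝ) : ℂ) • vecMulVec (ketαm α β) (star (ketαm α β)))

/-! For `x = 0` every component of both assemblages is a nonnegative multiple of the same
rank-one projector `|a⟩⟨a|`, and the fidelity of `c|a⟩⟨a|` and `c'|a⟩⟨a|` is `√(c c')`.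
Since `α² + β² = 1`, the distilled weights are `(1 ± P_fail(α² − β²))/2`, against the singlet's
`1/2`, and `√((1 ± s)/4) = ½√(1 ± s)`. -/

open scoped MatrixOrder

section Fidelity

variable {d : ℕ}

lemma matSqrt_eq_cfcSqrt {A : Matrix (Fin d) (Fin d) ℂ} (hA : A.PosSemidef) :
    matSqrt A = CFC.sqrt A := by
  rw [matSqrt, dif_pos hA, CFC.sqrt_eq_real_sqrt A hA.nonneg, cfcₙ_eq_cfc, hA.1.cfc_eq,
    IsHermitian.cfc, Unitary.conjStarAlgAut_apply]
  rfl

lemma matSqrt_eq_of_mul_self {A B : Matrix (Fin d) (Fin d) ℂ} (hB : B.PosSemidef)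
    (h : B * B = A) : matSqrt A = B := by
  have hA : A.PosSemidef := by
    simpa [← h, hB.1.eq] using posSemidef_conjTranspose_mul_self B
  rw [matSqrt_eq_cfcSqrt hA, CFC.sqrt_unique h hB.nonneg]

lemma matSqrt_smul_of_idempotent {P : Matrix (Fin d) (Fin d) ℂ} (hP : P.PosSemidef)
    (hP2 : P * P = P) {c : ℝ} (hc : 0 ≤ c) : matSqrt ((c : ℂ) • P) = (√c : ℂ) • P := by
  refine matSqrt_eq_of_mul_self (hP.smul (Complex.zero_le_real.mpr (Real.sqrt_nonneg c))) ?_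
  rw [smul_mul_smul_comm, hP2, ← Complex.ofReal_mul, Real.mul_self_sqrt hc]

lemma mFid_smul_of_idempotent {P : Matrix (Fin d) (Fin d) ℂ} (hP : P.PosSemidef)
    (hP2 : P * P = P) {c c' : ℝ} (hc : 0 ≤ c) (hc' : 0 ≤ c') :
    mFid ((c : ℂ) • P) ((c' : ℂ) • P) = √(c * c') * P.trace.re := by
  have hsandwich : (√c : ℂ) • P * ((c' : ℂ) • P) * ((√c : ℂ) • P) = ((c * c' : ℝ) : ℂ) • P := by
    simp only [smul_mul_smul_comm, hP2]
    congr 1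
    norm_cast
    rw [mul_right_comm, Real.mul_self_sqrt hc]
  rw [mFid, matSqrt_smul_of_idempotent hP hP2 hc, hsandwich,
    matSqrt_smul_of_idempotent hP hP2 (mul_nonneg hc hc'), trace_smul, smul_eq_mul,
    Complex.re_ofReal_mul]

lemma mFid_smul_vecMulVec_self_star {v : Fin d → ℂ} (hv : star v ⬝ᵥ v = 1) {c c' : ℝ}
    (hc : 0 ≤ c) (hc' : 0 ≤ c') :
    mFid ((c : ℂ) • vecMulVec v (star v)) ((c' : ℂ) • vecMulVec v (star v)) = √(c * c') := by
  have hP2 : vecMulVec v (star v) * vecMulVec v (star v) = vecMulVec v (star v) := by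
    rw [vecMulVec_mul_vecMulVec, hv, one_smul]
  rw [mFid_smul_of_idempotent (posSemidef_vecMulVec_self_star v) hP2 hc hc', trace_vecMulVec,
    dotProduct_comm, hv, Complex.one_re, mul_one]

end Fidelity

lemma abs_sq_sub_sq_le_one {α β : ℝ} (h : α ^ 2 + β ^ 2 = 1) : |α ^ 2 - β ^ 2| ≤ 1 :=
  abs_le.mpr ⟨by nlinarith [sq_nonneg α], by nlinarith [sq_nonneg β]⟩

lemma Real.sqrt_div_two_mul_half (x : ℝ) : √(x / 2 * (1 / 2)) = 1 / 2 * √x := by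
  rw [show x / 2 * (1 / 2) = (1 / 2) ^ 2 * x by ring, Real.sqrt_mul (by positivity),
    Real.sqrt_sq (by norm_num)]

section Assemblages

variable {α β : ℝ} (N : ℕ)

lemma σdist_zero_zero (h : α ^ 2 + β ^ 2 = 1) :
    σdist α β N 0 0 =
      (((1 + (α ^ 2 - β ^ 2) ^ (N - 1) * (α ^ 2 - β ^ 2)) / 2 : ℝ) : ℂ) • P00 := by
  simp only [σdist, if_true]
  congr 3
  linear_combination ((α ^ 2 - β ^ 2) ^ (N - 1) / 2) * h

lemma σdist_one_zero (h : α ^ 2 + β ^ 2 = 1) :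
    σdist α β N 1 0 =
      (((1 - (α ^ 2 - β ^ 2) ^ (N - 1) * (α ^ 2 - β ^ 2)) / 2 : ℝ) : ℂ) • P11 := by
  simp only [σdist, if_true, one_ne_zero, if_false]
  congr 3
  linear_combination ((α ^ 2 - β ^ 2) ^ (N - 1) / 2) * h

end Assemblages

lemma σΦ_zero_zero : σΦ 0 0 = ((1 / 2 : ℝ) : ℂ) • P00 := by simp [σΦ]

lemma σΦ_one_zero : σΦ 1 0 = ((1 / 2 : ℝ) : ℂ) • P11 := by simp [σΦ]

theorem distilled_fraction_x0_general (α β : ℝ) (hα2 : 1 / Real.sqrt 2 < α) (hα : α < 1)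
    (hβ : β = Real.sqrt (1 - α ^ 2)) (N : ℕ) :
    ∑ a, mFid (σdist α β N a 0) (σΦ a 0) =
      1 / 2 * (Real.sqrt (1 + (α ^ 2 - β ^ 2) ^ (N - 1) * (α ^ 2 - β ^ 2)) +
        Real.sqrt (1 - (α ^ 2 - β ^ 2) ^ (N - 1) * (α ^ 2 - β ^ 2))) := by
  have hα0 : 0 < α := (by positivity : (0 : ℝ) < 1 / √2).trans hα2
  have hnorm : α ^ 2 + β ^ 2 = 1 := by
    rw [hβ, Real.sq_sqrt (by nlinarith)]
    ring
  have hs : |(α ^ 2 - β ^ 2) ^ (N - 1) * (α ^ 2 - β ^ 2)| ≤ 1 := by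
    rw [← pow_succ, abs_pow]
    exact pow_le_one₀ (abs_nonneg _) (abs_sq_sub_sq_le_one hnorm)
  obtain ⟨hs₁, hs₂⟩ := abs_le.mp hs
  have he0 : star e0 ⬝ᵥ e0 = 1 := by simp [e0, dotProduct]
  have he1 : star e1 ⬝ᵥ e1 = 1 := by simp [e1, dotProduct]
  rw [Fin.sum_univ_two, σdist_zero_zero N hnorm, σdist_one_zero N hnorm, σΦ_zero_zero,
    σΦ_one_zero, P00, P11, mFid_smul_vecMulVec_self_star he0 (by linarith) (by norm_num),
    mFid_smul_vecMulVec_self_star he1 (by linarith) (by norm_num),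
    Real.sqrt_div_two_mul_half, Real.sqrt_div_two_mul_half, mul_add]

/-- The `x = 0` contribution to the singlet-assemblage fraction of the
distilled assemblage equals `½(√(1 + P_fail(α²−β²)) + √(1 − P_fail(α²−β²)))`. -/
theorem distilled_fraction_x0 (α β : ℝ) (hα2 : 1 / Real.sqrt 2 < α) (hα : α < 1)
    (hβ : β = Real.sqrt (1 - α ^ 2)) (N : ℕ) (hN : 2 ≤ N) :
    ∑ a, mFid (σdist α β N a 0) (σΦ a 0) =
      1 / 2 * (Real.sqrt (1 + (α ^ 2 - β ^ 2) ^ (N - 1) * (α ^ 2 - β ^ 2)) +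
        Real.sqrt (1 - (α ^ 2 - β ^ 2) ^ (N - 1) * (α ^ 2 - β ^ 2))) :=
  distilled_fraction_x0_general α β hα2 hα hβ N
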